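/- Let ℵ_α be a regular infinite cardinal and (P, ≤) a partially ordered set in which every chain is finite and every antichain has cardinality at most ℵ_α. Then P has cardinality at most ℵ_α. -/

import Mathlib

/-!
Finite chains make both `<` and `>` well-founded. Hence every subset `s` lies below its set of
maximal elements, which is an antichain, so `#s ≤ κ` as soon as every `Iic m` with `m ∈ s` has
size at most `κ`. Applied to `s = Iio x`, this bounds `#(Iic x)` by well-founded induction on `x`,
and applied to `s = univ` it bounds `#P`.
-/

universe u

open Cardinal Set

section

variable {α : Type*}

theorem wellFoundedLT_of_isChain_finite [Preorder α]
    (hchain : ∀ c : Set α, IsChain (· ≤ ·) c → c.Finite) : WellFoundedLT α := by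
  refine ⟨RelEmbedding.wellFounded_iff_isEmpty.2 ⟨fun f => ?_⟩⟩
  have hf : StrictAnti f := fun _ _ h => f.map_rel_iff.2 h
  exact infinite_range_of_injective hf.injective (hchain _ hf.antitone.isChain_range)

theorem wellFoundedGT_of_isChain_finite [Preorder α]
    (hchain : ∀ c : Set α, IsChain (· ≤ ·) c → c.Finite) : WellFoundedGT α := by
  refine ⟨RelEmbedding.wellFounded_iff_isEmpty.2 ⟨fun f => ?_⟩⟩
  have hf : StrictMono f := fun _ _ h => f.map_rel_iff.2 h
  exact infinite_range_of_injective hf.injective (hchain _ hf.monotone.isChain_range)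

theorem exists_le_maximal_of_wellFoundedGT [Preorder α] [WellFoundedGT α] {s : Set α} {a : α}
    (ha : a ∈ s) : ∃ b, a ≤ b ∧ Maximal (· ∈ s) b := by
  obtain ⟨b, hb⟩ := WellFoundedGT.exists_maximal ‹_› {y | y ∈ s ∧ a ≤ y} ⟨a, ha, le_rfl⟩
  exact ⟨b, hb.prop.2, hb.prop.1, fun y hy hby => hb.2 ⟨hy, hb.prop.2.trans hby⟩ hby⟩

end

namespace Cardinal

variable {α : Type u} [PartialOrder α] {κ : Cardinal.{u}}

theorem mk_le_of_forall_mk_Iic_le [WellFoundedGT α] (hκ : ℵ₀ ≤ κ)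
    (hanti : ∀ a : Set α, IsAntichain (· ≤ ·) a → #a ≤ κ) {s : Set α}
    (hs : ∀ m ∈ s, #(Iic m) ≤ κ) : #s ≤ κ := by
  let M := {m | Maximal (· ∈ s) m}
  have hcover : s ⊆ ⋃ m ∈ M, Iic m := fun x hx => by
    obtain ⟨m, hxm, hm⟩ := exists_le_maximal_of_wellFoundedGT hx
    exact mem_biUnion hm hxm
  calc #s ≤ #(⋃ m ∈ M, Iic m) := mk_le_mk_of_subset hcover
    _ ≤ #M * ⨆ m : M, #(Iic m.1) := mk_biUnion_le _ _
    _ ≤ κ * κ :=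
      mul_le_mul' (hanti M (setOfPred_maximal_antichain _)) (ciSup_le' fun m => hs m m.2.prop)
    _ = κ := mul_eq_self hκ

theorem mk_Iic_le_of_isChain_finite (hκ : ℵ₀ ≤ κ)
    (hchain : ∀ c : Set α, IsChain (· ≤ ·) c → c.Finite)
    (hanti : ∀ a : Set α, IsAntichain (· ≤ ·) a → #a ≤ κ) (x : α) : #(Iic x) ≤ κ := by
  have := wellFoundedLT_of_isChain_finite hchain
  have := wellFoundedGT_of_isChain_finite hchain
  induction x using WellFoundedLT.induction with
  | _ x ih =>
    have hIio : #(Iio x) ≤ κ := mk_le_of_forall_mk_Iic_le hκ hanti fun m hm => ih m hm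
    calc #(Iic x) = #(insert x (Iio x) : Set α) := by rw [Iio_insert]
      _ ≤ #(Iio x) + 1 := mk_insert_le
      _ ≤ κ + 1 := by gcongr
      _ = κ := add_one_eq hκ

theorem mk_le_of_isChain_finite (hκ : ℵ₀ ≤ κ)
    (hchain : ∀ c : Set α, IsChain (· ≤ ·) c → c.Finite)
    (hanti : ∀ a : Set α, IsAntichain (· ≤ ·) a → #a ≤ κ) : #α ≤ κ := by
  have := wellFoundedGT_of_isChain_finite hchain
  rw [← mk_univ]
  exact mk_le_of_forall_mk_Iic_le hκ hanti fun m _ => mk_Iic_le_of_isChain_finite hκ hchain hanti m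

end Cardinal

/-- If `κ` is a regular (hence infinite) cardinal and `(P, ≤)` is a poset in which
every chain is finite and every antichain has cardinality at most `κ`, then `P` has
cardinality at most `κ`. -/
theorem stmt_10 {P : Type u} [PartialOrder P] (κ : Cardinal.{u}) (hκ : κ.IsRegular)
    (hchain : ∀ c : Set P, IsChain (· ≤ ·) c → c.Finite)
    (hanti : ∀ a : Set P, IsAntichain (· ≤ ·) a → Cardinal.mk a ≤ κ) :
    Cardinal.mk P ≤ κ :=
  Cardinal.mk_le_of_isChain_finite hκ.aleph0_le hchain hanti
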